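/- arXiv:1311.1494 — 5 statements merged into one kernel-verified Lean document; each statement's English description precedes it below -/
import Mathlib

section
/- Let $a<b$, $c<d$, and let $u \in C^1([a,b]\times[c,d])$ satisfy $u(a,y)=u(b,y)=0$ for all $y \in [c,d]$. Then $\int_c^d \int_a^b |\partial u/\partial x|\,dx\,dy \geq \frac{2}{b-a} \int_c^d \int_a^b |u(x,y)|\,dx\,dy$. -/
/-!
For each fixed `y`, the function `x ↦ u x y` vanishes at both ends of `[a, b]`, so by the
fundamental theorem of calculus `|u x y|` is bounded both by `∫ₐˣ |∂ₓu|` and by `∫ₓᵇ |∂ₓu|`;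
adding the two bounds gives `2 |u x y| ≤ ∫ₐᵇ |∂ₓu|`. Integrating in `x` and then in `y`
yields the inequality.
-/

open Set intervalIntegral MeasureTheory

theorem abs_sub_le_integral_abs_deriv {f f' : ℝ → ℝ} {a b : ℝ} (hab : a ≤ b)
    (hf : ∀ x ∈ Icc a b, HasDerivAt f (f' x) x) (hf' : IntervalIntegrable f' volume a b) :
    |f b - f a| ≤ ∫ t in a..b, |f' t| := by
  rw [← integral_eq_sub_of_hasDerivAt (fun x hx => hf x (uIcc_of_le hab ▸ hx)) hf']
  exact abs_integral_le_integral_abs hab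

theorem two_mul_abs_le_integral_abs_deriv {f f' : ℝ → ℝ} {a b x : ℝ}
    (hf : ∀ x ∈ Icc a b, HasDerivAt f (f' x) x) (hf' : IntervalIntegrable f' volume a b)
    (ha : f a = 0) (hb : f b = 0) (hx : x ∈ Icc a b) :
    2 * |f x| ≤ ∫ t in a..b, |f' t| := by
  have hab : a ≤ b := hx.1.trans hx.2
  have hax : uIcc a x ⊆ uIcc a b := uIcc_subset_uIcc_left (uIcc_of_le hab ▸ hx)
  have hxb : uIcc x b ⊆ uIcc a b := uIcc_subset_uIcc_right (uIcc_of_le hab ▸ hx)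
  have left : |f x| ≤ ∫ t in a..x, |f' t| := by
    simpa [ha] using abs_sub_le_integral_abs_deriv hx.1
      (fun t ht => hf t ⟨ht.1, ht.2.trans hx.2⟩) (hf'.mono_set hax)
  have right : |f x| ≤ ∫ t in x..b, |f' t| := by
    simpa [hb] using abs_sub_le_integral_abs_deriv hx.2
      (fun t ht => hf t ⟨hx.1.trans ht.1, ht.2⟩) (hf'.mono_set hxb)
  rw [← integral_add_adjacent_intervals (hf'.abs.mono_set hax) (hf'.abs.mono_set hxb)]
  linarith

theorem div_mul_integral_abs_le_integral_abs_deriv {f f' : ℝ → ℝ} {a b : ℝ} (hab : a < b)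
    (hf : ∀ x ∈ Icc a b, HasDerivAt f (f' x) x) (hf' : IntervalIntegrable f' volume a b)
    (ha : f a = 0) (hb : f b = 0) :
    (2 / (b - a)) * ∫ x in a..b, |f x| ≤ ∫ x in a..b, |f' x| := by
  have hf_cont : ContinuousOn f (Icc a b) := fun x hx => (hf x hx).continuousAt.continuousWithinAt
  have hmono : ∫ x in a..b, 2 * |f x| ≤ ∫ _ in a..b, ∫ t in a..b, |f' t| :=
    integral_mono_on hab.le ((hf_cont.abs.intervalIntegrable_of_Icc hab.le).const_mul 2)
      intervalIntegrable_const fun x hx => two_mul_abs_le_integral_abs_deriv hf hf' ha hb hx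
  rw [intervalIntegral.integral_const_mul, intervalIntegral.integral_const, smul_eq_mul] at hmono
  rw [div_mul_eq_mul_div, div_le_iff₀ (sub_pos.mpr hab)]
  linarith

theorem continuousOn_intervalIntegral_of_continuousOn_Icc_prod {E : Type*}
    [NormedAddCommGroup E] [NormedSpace ℝ E] {μ : Measure ℝ} [NullSingletonClass μ]
    [IsLocallyFiniteMeasure μ] {f : ℝ → ℝ → E} {a b c d : ℝ} (hab : a ≤ b) (hcd : c ≤ d)
    (hf : ContinuousOn (fun p : ℝ × ℝ => f p.1 p.2) (Icc a b ×ˢ Icc c d)) :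
    ContinuousOn (fun y => ∫ x in a..b, f x y ∂μ) (Icc c d) := by
  -- Precomposing with the projections onto `[a, b]` and `[c, d]` extends `f` continuously to
  -- the whole plane without changing the integrals in question.
  set g : ℝ → ℝ → E := fun y x => f (projIcc a b hab x) (projIcc c d hcd y)
  have hg : Continuous (Function.uncurry g) :=
    hf.comp_continuous
      (f := fun p : ℝ × ℝ => ((projIcc a b hab p.2 : ℝ), (projIcc c d hcd p.1 : ℝ))) (by fun_prop)
      fun p => ⟨Subtype.prop _, Subtype.prop _⟩
  refine (continuous_parametric_intervalIntegral_of_continuous' (μ := μ) hg a b).continuousOn.congr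
    fun y hy => integral_congr fun x hx => ?_
  simp [g, projIcc_of_mem hab (uIcc_of_le hab ▸ hx), projIcc_of_mem hcd hy]

/-- Lemma 3.2: Poincaré-type inequality on a rectangle for a C¹ function
vanishing on the two vertical sides. -/
theorem stmt_0 (a b c d : ℝ) (hab : a < b) (hcd : c < d)
    (u ux : ℝ → ℝ → ℝ)
    (hderiv : ∀ y ∈ Icc c d, ∀ x ∈ Icc a b, HasDerivAt (fun x => u x y) (ux x y) x)
    (hcont : ContinuousOn (fun p : ℝ × ℝ => u p.1 p.2) (Icc a b ×ˢ Icc c d))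
    (hcont' : ContinuousOn (fun p : ℝ × ℝ => ux p.1 p.2) (Icc a b ×ˢ Icc c d))
    (hzero : ∀ y ∈ Icc c d, u a y = 0 ∧ u b y = 0) :
    (∫ y in c..d, ∫ x in a..b, |ux x y|) ≥
      (2 / (b - a)) * ∫ y in c..d, ∫ x in a..b, |u x y| := by
  have hu := continuousOn_intervalIntegral_of_continuousOn_Icc_prod (μ := volume)
    (f := fun x y => |u x y|) hab.le hcd.le hcont.abs
  have hux := continuousOn_intervalIntegral_of_continuousOn_Icc_prod (μ := volume)
    (f := fun x y => |ux x y|) hab.le hcd.le hcont'.abs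
  rw [ge_iff_le, ← intervalIntegral.integral_const_mul]
  refine integral_mono_on hcd.le ((hu.intervalIntegrable_of_Icc hcd.le).const_mul _)
    (hux.intervalIntegrable_of_Icc hcd.le) fun y hy => ?_
  have hux_y : ContinuousOn (fun x => ux x y) (Icc a b) :=
    hcont'.comp (by fun_prop) fun x hx => mk_mem_prod hx hy
  exact div_mul_integral_abs_le_integral_abs_deriv hab (hderiv y hy)
    (hux_y.intervalIntegrable_of_Icc hab.le) (hzero y hy).1 (hzero y hy).2
end

section
/- Let $M, \delta > 0$, let $\Omega \subseteq \mathbb{R}^n$ be open (or more generally a measure space), and let $g, h \in L^1(\Omega)$ with $g, h \geq 0$ almost everywhere, $\int_\Omega g \geq \delta$, and $\int_\Omega h \leq M$. Then $\int_\Omega \sqrt{g^2+h^2} \geq \int_\Omega h + \frac{\delta^2}{2M+\delta}$. -/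
open MeasureTheory

/-- Lemma 3.3: if `∫ g ≥ δ` and `∫ h ≤ M` for nonnegative integrable `g, h`,
then `∫ √(g² + h²) ≥ ∫ h + δ²/(2M + δ)`. -/
theorem stmt_1 {α : Type*} [MeasurableSpace α] (μ : Measure α)
    (M δ : ℝ) (hM : 0 < M) (hδ : 0 < δ)
    (g h : α → ℝ) (hg : Integrable g μ) (hh : Integrable h μ)
    (hg0 : ∀ᵐ x ∂μ, 0 ≤ g x) (hh0 : ∀ᵐ x ∂μ, 0 ≤ h x)
    (hgδ : δ ≤ ∫ x, g x ∂μ) (hhM : ∫ x, h x ∂μ ≤ M) :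
    (∫ x, Real.sqrt ((g x) ^ 2 + (h x) ^ 2) ∂μ) ≥
      (∫ x, h x ∂μ) + δ ^ 2 / (2 * M + δ) := by
  set s : ℝ := Real.sqrt (δ ^ 2 + M ^ 2) with hs_def
  have hs2 : s ^ 2 = δ ^ 2 + M ^ 2 := Real.sq_sqrt (by positivity)
  have hs0 : 0 < s := Real.sqrt_pos.mpr (by positivity)
  have hsM : M ≤ s := by nlinarith
  have hsMδ : s ≤ M + δ := by
    have h1 : s ≤ Real.sqrt ((M + δ) ^ 2) := Real.sqrt_le_sqrt (by nlinarith)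
    rwa [Real.sqrt_sq (by positivity)] at h1
  have hmeas : AEStronglyMeasurable (fun x => Real.sqrt (g x ^ 2 + h x ^ 2)) μ :=
    Real.continuous_sqrt.comp_aestronglyMeasurable
      ((hg.aestronglyMeasurable.pow 2).add (hh.aestronglyMeasurable.pow 2))
  have hint : Integrable (fun x => Real.sqrt (g x ^ 2 + h x ^ 2)) μ := by
    refine (hg.abs.add hh.abs).mono hmeas ?_
    filter_upwards with x
    rw [Real.norm_eq_abs, abs_of_nonneg (Real.sqrt_nonneg _)]
    have h1 : Real.sqrt (g x ^ 2 + h x ^ 2) ≤ Real.sqrt ((|g x| + |h x|) ^ 2) := by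
      apply Real.sqrt_le_sqrt
      nlinarith [mul_nonneg (abs_nonneg (g x)) (abs_nonneg (h x)), sq_abs (g x), sq_abs (h x)]
    rw [Real.sqrt_sq (by positivity)] at h1
    calc Real.sqrt (g x ^ 2 + h x ^ 2) ≤ |g x| + |h x| := h1
      _ ≤ ‖|g x| + |h x|‖ := le_abs_self _
  have hlowint : Integrable (fun x => (δ * g x + M * h x) / s) μ :=
    ((hg.const_mul δ).add (hh.const_mul M)).div_const s
  have hle : ∀ᵐ x ∂μ, (δ * g x + M * h x) / s ≤ Real.sqrt (g x ^ 2 + h x ^ 2) := by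
    filter_upwards [hg0, hh0] with x hgx hhx
    rw [div_le_iff₀ hs0]
    have hsq : (Real.sqrt (g x ^ 2 + h x ^ 2)) ^ 2 = g x ^ 2 + h x ^ 2 :=
      Real.sq_sqrt (by positivity)
    have hnn : 0 ≤ Real.sqrt (g x ^ 2 + h x ^ 2) := Real.sqrt_nonneg _
    nlinarith [sq_nonneg (δ * h x - M * g x),
      mul_nonneg (mul_nonneg hδ.le hgx) hs0.le,
      mul_nonneg (mul_nonneg hM.le hhx) hs0.le,
      sq_nonneg (Real.sqrt (g x ^ 2 + h x ^ 2) * s - (δ * g x + M * h x)),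
      mul_nonneg hnn hs0.le]
  have hmono : ∫ x, (δ * g x + M * h x) / s ∂μ
      ≤ ∫ x, Real.sqrt (g x ^ 2 + h x ^ 2) ∂μ := integral_mono_ae hlowint hint hle
  have hcalc : ∫ x, (δ * g x + M * h x) / s ∂μ
      = (δ * (∫ x, g x ∂μ) + M * (∫ x, h x ∂μ)) / s := by
    rw [integral_div, integral_add (hg.const_mul δ) (hh.const_mul M),
      integral_const_mul, integral_const_mul]
  rw [hcalc] at hmono
  have hJ0 : 0 ≤ ∫ x, h x ∂μ := integral_nonneg_of_ae hh0
  set I := ∫ x, g x ∂μ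
  set J := ∫ x, h x ∂μ
  have hd : δ ^ 2 / (2 * M + δ) ≤ s - M := by
    rw [div_le_iff₀ (by positivity)]
    nlinarith [mul_nonneg (sub_nonneg.2 hsM) (sub_nonneg.2 hsMδ)]
  have hfinal : J + (s - M) ≤ (δ * I + M * J) / s := by
    rw [le_div_iff₀ hs0]
    nlinarith [mul_nonneg (sub_nonneg.2 hsM) (sub_nonneg.2 hhM),
      mul_le_mul_of_nonneg_left hgδ hδ.le]
  calc J + δ ^ 2 / (2 * M + δ) ≤ J + (s - M) := by linarith
    _ ≤ (δ * I + M * J) / s := hfinal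
    _ ≤ _ := hmono
end

section
/- Let $\theta \in (0,1]$. Define $P = (\cos(\theta/2), \sin(\theta/2))$, $Q = (\cos(\theta^2/4), \sin(\theta^2/4))$, and $V = (\cos(\theta/2), 0)$ in $\mathbb{R}^2$. Then the dot product $\overrightarrow{QP} \cdot \overrightarrow{QV} < 0$; that is, the angle $\angle PQV$ is obtuse. -/
/-!
Put `a = θ / 2`, so that `Q` sits at angle `a²`. Writing `d = (a - a²) / 2`, the dot product
factors as `sin d * (3 sin d - sin ((3a + a²) / 2))`. Here `sin d > 0`, and the second factor
is negative because `3 sin d < 3d` while `sin s > s - s³ / 6` for `s = (3a + a²) / 2`, and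
`s - 3d = 2a²` dominates `s³ / 6` for small `a`.
-/

open Real

theorem sub_cos_mul_sub_cos_add_sub_sin_mul_neg_sin (a b : ℝ) :
    (cos a - cos b) * (cos a - cos b) + (sin a - sin b) * (0 - sin b) =
      sin ((a - b) / 2) * (3 * sin ((a - b) / 2) - sin ((3 * a + b) / 2)) := by
  obtain ⟨x, y, rfl, rfl⟩ : ∃ x y, a = y + x ∧ b = y - x :=
    ⟨(a - b) / 2, (a + b) / 2, by ring, by ring⟩
  rw [show (y + x - (y - x)) / 2 = x by ring, show (3 * (y + x) + (y - x)) / 2 = 2 * y + x by ring]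
  simp only [sin_add, cos_add, sin_sub, cos_sub, sin_two_mul, cos_two_mul]
  linear_combination 4 * sin x ^ 2 * sin_sq_add_cos_sq y

theorem three_sin_lt_sin {a : ℝ} (ha0 : 0 < a) (ha1 : a ≤ 1 / 2) :
    3 * sin ((a - a ^ 2) / 2) < sin ((3 * a + a ^ 2) / 2) := by
  set d := (a - a ^ 2) / 2 with hd_def
  set s := (3 * a + a ^ 2) / 2 with hs_def
  have hd : 0 < d := by nlinarith
  have hs : 0 < s := by positivity
  have hs_le : s ≤ 2 * a := by nlinarith
  have hcube : s ^ 3 ≤ 12 * a ^ 2 := by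
    calc s ^ 3 ≤ (2 * a) ^ 3 := by gcongr
      _ ≤ 12 * a ^ 2 := by nlinarith
  calc 3 * sin d < 3 * d := by linarith [sin_lt hd]
    _ ≤ s - s ^ 3 / 6 := by linarith
    _ < sin s := sin_gt_sub_cube hs

/-- With `P = (cos(θ/2), sin(θ/2))`, `Q = (cos(θ²/4), sin(θ²/4))`,
`V = (cos(θ/2), 0)` for `θ ∈ (0,1]`, the dot product `(P - Q) · (V - Q)` is
negative, i.e. the angle `∠PQV` is obtuse. -/
theorem stmt_5 (θ : ℝ) (hθ0 : 0 < θ) (hθ1 : θ ≤ 1) :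
    let P : ℝ × ℝ := (cos (θ / 2), sin (θ / 2))
    let Q : ℝ × ℝ := (cos (θ ^ 2 / 4), sin (θ ^ 2 / 4))
    let V : ℝ × ℝ := (cos (θ / 2), 0)
    (P.1 - Q.1) * (V.1 - Q.1) + (P.2 - Q.2) * (V.2 - Q.2) < 0 := by
  show (cos (θ / 2) - cos (θ ^ 2 / 4)) * (cos (θ / 2) - cos (θ ^ 2 / 4)) +
      (sin (θ / 2) - sin (θ ^ 2 / 4)) * (0 - sin (θ ^ 2 / 4)) < 0
  have ha0 : 0 < θ / 2 := by positivity
  rw [show θ ^ 2 / 4 = (θ / 2) ^ 2 by ring, sub_cos_mul_sub_cos_add_sub_sin_mul_neg_sin]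
  refine mul_neg_of_pos_of_neg (sin_pos_of_pos_of_lt_pi (by nlinarith) (by nlinarith [pi_gt_three])) ?_
  linarith [three_sin_lt_sin ha0 (by linarith)]
end

section
/- For all $\theta \in (0,1]$, $\frac{3}{2} + \frac{1}{2}\cos\theta - \frac{1}{2}\cos(\theta/2 + \theta^2/4) - \frac{3}{2}\cos(\theta/2 - \theta^2/4) < 0$. -/
open Real

/-- For `θ ∈ (0,1]`,
`3/2 + cos θ / 2 - cos(θ/2 + θ²/4)/2 - 3 cos(θ/2 - θ²/4)/2 < 0`. -/
theorem stmt_6 (θ : ℝ) (hθ0 : 0 < θ) (hθ1 : θ ≤ 1) :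
    3 / 2 + (1 / 2) * cos θ - (1 / 2) * cos (θ / 2 + θ ^ 2 / 4)
      - (3 / 2) * cos (θ / 2 - θ ^ 2 / 4) < 0 := by
  have ha : (0:ℝ) < θ / 2 + θ ^ 2 / 4 := by nlinarith
  have hb : (0:ℝ) < θ / 2 - θ ^ 2 / 4 := by nlinarith
  have h1 := Real.one_sub_sq_div_two_lt_cos (x := θ / 2 + θ ^ 2 / 4) ha.ne'
  have h2 := Real.one_sub_sq_div_two_lt_cos (x := θ / 2 - θ ^ 2 / 4) hb.ne'
  have h3 : |cos θ - (1 - θ ^ 2 / 2)| ≤ |θ| ^ 4 * (5 / 96) :=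
    Real.cos_bound (by rw [abs_of_pos hθ0]; exact hθ1)
  rw [abs_of_pos hθ0] at h3
  have h4 := abs_le.mp h3
  nlinarith [h4.2, pow_le_pow_left₀ hθ0.le hθ1 4, pow_pos hθ0 3]
end

section
/- Let $\theta \in (0,1]$ and $\alpha \in [\theta^2/2, \theta)$. Let $P, S$ be points on the unit circle separated by arc length $\theta$, and let $Q, R$ lie on the arc from $P$ to $S$ such that the arc $QR$ has length $\alpha$, is centered in the arc $PS$ (i.e., arcs $PQ$ and $RS$ have equal length), with $Q$ between $P$ and $R$. Let $T, U$ be the points on the chord $\overline{PS}$ such that $\triangle PQT$ and $\triangle RSU$ are right triangles (with right angles at $T$ and $U$, legs $\overline{QT} \perp \overline{PS}$ and $\overline{RU} \perp \overline{PS}$). Then the closed triangles $\triangle PQT$ and $\triangle RSU$ are disjoint. -/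
open Real Set

/-- Lemma 3.1 (disjoint triangles): let `P, S` be points of the unit circle
separated by arc length `θ ∈ (0,1]`, and let `Q, R` lie on the arc `PS` so that
the arc `QR` has length `α ∈ [θ²/2, θ)` and is centered in the arc `PS` (with
`Q` between `P` and `R`).  If `T, U` are the feet of the perpendiculars from
`Q` and `R` to the chord `PS` (so that `△PQT`, `△RSU` are right triangles),
then the closed triangles `△PQT` and `△RSU` are disjoint. -/
theorem stmt_17 (θ α ψ : ℝ) (hθ0 : 0 < θ) (hθ1 : θ ≤ 1)
    (hα1 : θ ^ 2 / 2 ≤ α) (hα2 : α < θ)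
    (P S Q R T U : ℝ × ℝ)
    (hP : P = (cos (ψ + θ / 2), sin (ψ + θ / 2)))
    (hS : S = (cos (ψ - θ / 2), sin (ψ - θ / 2)))
    (hQ : Q = (cos (ψ + α / 2), sin (ψ + α / 2)))
    (hR : R = (cos (ψ - α / 2), sin (ψ - α / 2)))
    (hT : T ∈ segment ℝ P S)
    (hU : U ∈ segment ℝ P S)
    (hTperp : (Q.1 - T.1) * (S.1 - P.1) + (Q.2 - T.2) * (S.2 - P.2) = 0)
    (hUperp : (R.1 - U.1) * (S.1 - P.1) + (R.2 - U.2) * (S.2 - P.2) = 0) :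
    Disjoint (convexHull ℝ ({P, Q, T} : Set (ℝ × ℝ)))
      (convexHull ℝ ({R, S, U} : Set (ℝ × ℝ))) := by
  subst hP hS hQ hR
  have hα0 : 0 < α := lt_of_lt_of_le (by positivity) hα1
  have hπ : (1:ℝ) < π := by linarith [Real.pi_gt_three]
  have hsa : 0 < sin (α / 2) := sin_pos_of_pos_of_lt_pi (by linarith) (by linarith)
  have hst2 : 0 < sin (θ / 2) := sin_pos_of_pos_of_lt_pi (by linarith) (by linarith)
  have hmono : sin (α / 2) ≤ sin (θ / 2) := by
    apply (Real.strictMonoOn_sin.monotoneOn) ?_ ?_ (by linarith)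
    · constructor <;> [linarith [Real.pi_pos]; linarith]
    · constructor <;> [linarith [Real.pi_pos]; linarith]
  set f : ℝ × ℝ → ℝ := fun p => -sin ψ * p.1 + cos ψ * p.2 with hf
  have hlin : IsLinearMap ℝ f := by
    constructor
    · intro a b; simp only [hf, Prod.fst_add, Prod.snd_add]; ring
    · intro c a; simp only [hf, Prod.smul_fst, Prod.smul_snd, smul_eq_mul]; ring
  have pyth := sin_sq_add_cos_sq ψ
  have hfP : f (cos (ψ + θ / 2), sin (ψ + θ / 2)) = sin (θ / 2) := by
    simp only [hf, cos_add, sin_add]; linear_combination sin (θ / 2) * pyth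
  have hfS : f (cos (ψ - θ / 2), sin (ψ - θ / 2)) = -sin (θ / 2) := by
    simp only [hf, cos_sub, sin_sub]; linear_combination -sin (θ / 2) * pyth
  have hfQ : f (cos (ψ + α / 2), sin (ψ + α / 2)) = sin (α / 2) := by
    simp only [hf, cos_add, sin_add]; linear_combination sin (α / 2) * pyth
  have hfR : f (cos (ψ - α / 2), sin (ψ - α / 2)) = -sin (α / 2) := by
    simp only [hf, cos_sub, sin_sub]; linear_combination -sin (α / 2) * pyth
  have hfT : f T = sin (α / 2) := by
    have h3 : (f T - sin (α / 2)) * (2 * sin (θ / 2)) = 0 := by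
      simp only [hf]
      simp only [cos_add, sin_add, cos_sub, sin_sub] at hTperp
      linear_combination hTperp + 2 * sin (θ / 2) * sin (α / 2) * pyth
    rcases mul_eq_zero.1 h3 with h | h
    · linarith [sub_eq_zero.1 h]
    · exfalso; nlinarith
  have hfU : f U = -sin (α / 2) := by
    have h3 : (f U + sin (α / 2)) * (2 * sin (θ / 2)) = 0 := by
      simp only [hf]
      simp only [cos_add, sin_add, cos_sub, sin_sub] at hUperp
      linear_combination hUperp - 2 * sin (θ / 2) * sin (α / 2) * pyth
    rcases mul_eq_zero.1 h3 with h | h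
    · linarith [add_eq_zero_iff_eq_neg.1 h]
    · exfalso; nlinarith
  have hA : convexHull ℝ ({(cos (ψ + θ / 2), sin (ψ + θ / 2)), (cos (ψ + α / 2), sin (ψ + α / 2)), T} : Set (ℝ × ℝ)) ⊆ {p | sin (α / 2) ≤ f p} := by
    apply convexHull_min ?_ (convex_halfSpace_ge hlin _)
    intro p hp
    rcases hp with rfl | rfl | rfl
    · simp only [Set.mem_setOf_eq, hfP]; linarith
    · simp only [Set.mem_setOf_eq, hfQ]; exact le_rfl
    · simp only [Set.mem_setOf_eq, hfT]; linarith
  have hB : convexHull ℝ ({(cos (ψ - α / 2), sin (ψ - α / 2)), (cos (ψ - θ / 2), sin (ψ - θ / 2)), U} : Set (ℝ × ℝ)) ⊆ {p | f p ≤ -sin (α / 2)} := by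
    apply convexHull_min ?_ (convex_halfSpace_le hlin _)
    intro p hp
    rcases hp with rfl | rfl | rfl
    · simp only [Set.mem_setOf_eq, hfR]; exact le_rfl
    · simp only [Set.mem_setOf_eq, hfS]; linarith
    · simp only [Set.mem_setOf_eq, hfU]; linarith
  rw [Set.disjoint_left]
  intro x hx1 hx2
  have h1 := hA hx1
  have h2 := hB hx2
  simp only [Set.mem_setOf_eq] at h1 h2
  linarith
end
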